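/- arXiv:1107.4259 — 6 statements merged into one kernel-verified Lean document; each statement's English description precedes it below -/
import Mathlib

section
/- Let K be a field complete with respect to a nonarchimedean absolute value whose value group |K*| ⊆ ℝ>0 is nontrivial and free of rank one (i.e., generated by a single real number ≠ 1). Let F be a complete subfield of K with |F*| ≠ {1}. If the residue field extension of F inside the residue field of K is finite, then K is a finite field extension of F. -/
/-!
Choose a uniformizer `π` of `K`, an element `t ∈ F` with `0 < |t| < 1`, and lifts `c₁, …, cₙ`
of generators of the residue field of `K` over the image of `O_F`. Every `y ∈ O_K` agrees with an
`O_F`-combination of the `cᵢ` up to an error of absolute value `≤ |π|`; dividing the error by `π`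
and repeating `m` times, where `|π| ^ m ≤ |t|`, approximates `y` by an `O_F`-combination of the
`π ^ j * cᵢ` (`j < m`) up to an element of `t • O_K`. Iterating this with `t` expresses `y` through
`t`-adic series with coefficients in `O_F`, which converge in the complete field `F`. Hence the
`π ^ j * cᵢ` span `O_K` over `F`, and so all of `K = ⋃ₖ t⁻ᵏ O_K`.
-/

/-- The maximal ideal `{x : |x| < 1}` of the ring of integers `{x : |x| ≤ 1}` of a
nonarchimedean (real-)valued field. -/
def valMaxIdeal {K : Type*} [Field K] (v : Valuation K NNReal) : Ideal v.integer where
  carrier := {x | v (x : K) < 1}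
  add_mem' := fun {a b} ha hb => by
    simpa using lt_of_le_of_lt (v.map_add (a : K) (b : K)) (max_lt ha hb)
  zero_mem' := by
    show v ((0 : v.integer) : K) < 1
    rw [ZeroMemClass.coe_zero, map_zero]
    exact zero_lt_one
  smul_mem' := fun c x hx => by
    have h1 : v (c : K) ≤ 1 := c.2
    have : v ((c : K) * (x : K)) < 1 := by
      rw [v.map_mul]
      exact lt_of_le_of_lt (mul_le_of_le_one_left zero_le h1) hx
    simpa using this

/-- The canonical ring homomorphism from the ring of integers of a subfield `F` of a
valued field `K` to the residue ring `O_K / m_K` of `K`. -/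
noncomputable def subfieldToResidue {K : Type*} [Field K] (v : Valuation K NNReal) (F : Subfield K) :
    (v.comap F.subtype).integer →+*
      (v.integer ⧸ valMaxIdeal v) :=
  (Ideal.Quotient.mk (valMaxIdeal v)).comp
    (RingHom.codRestrict ((F.subtype).comp (Subring.subtype (v.comap F.subtype).integer))
      v.integer (fun x => x.2))

open Filter Topology

theorem zpow_le_self_of_lt_one {G₀ : Type*} [GroupWithZero G₀] [PartialOrder G₀]
    [PosMulReflectLT G₀] [ZeroLEOneClass G₀] {a : G₀} (ha0 : 0 < a) (ha1 : a < 1) {m : ℤ}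
    (h : a ^ m < 1) : a ^ m ≤ a := by
  have hm : 0 < m := (zpow_lt_one_iff_right_of_lt_one₀ ha0 ha1).1 h
  simpa using (zpow_le_zpow_iff_right_of_lt_one₀ ha0 ha1).2 (show 1 ≤ m by omega)

theorem Valuation.exists_uniformizer_of_forall_eq_zpow {K : Type*} [Field K]
    (v : Valuation K NNReal) {r : NNReal} (hr1 : r ≠ 1)
    (hsub : ∀ x : K, x ≠ 0 → ∃ m : ℤ, v x = r ^ m) (hgen : ∃ x : K, x ≠ 0 ∧ v x = r) :
    ∃ π : K, π ≠ 0 ∧ v π < 1 ∧ ∀ y : K, v y < 1 → v y ≤ v π := by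
  obtain ⟨x₀, hx₀, rfl⟩ := hgen
  have hpos : 0 < v x₀ := pos_iff_ne_zero.2 (v.ne_zero_iff.2 hx₀)
  obtain ⟨π, hπ0, hπ1, hπgen⟩ :
      ∃ π : K, π ≠ 0 ∧ v π < 1 ∧ ∀ y : K, y ≠ 0 → ∃ m : ℤ, v y = v π ^ m := by
    rcases hr1.lt_or_gt with hlt | hgt
    · exact ⟨x₀, hx₀, hlt, hsub⟩
    · refine ⟨x₀⁻¹, inv_ne_zero hx₀, by rwa [map_inv₀, inv_lt_one₀ hpos], fun y hy => ?_⟩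
      obtain ⟨m, hm⟩ := hsub y hy
      exact ⟨-m, by rw [hm, map_inv₀, inv_zpow', neg_neg]⟩
  refine ⟨π, hπ0, hπ1, fun y hy => ?_⟩
  rcases eq_or_ne y 0 with rfl | hy0
  · simp
  obtain ⟨m, hm⟩ := hπgen y hy0
  rw [hm] at hy ⊢
  exact zpow_le_self_of_lt_one (pos_iff_ne_zero.2 (v.ne_zero_iff.2 hπ0)) hπ1 hy

section Approximation

variable {K Γ₀ : Type*} [Field K] [LinearOrderedCommGroupWithZero Γ₀] {ι : Type*} [Fintype ι]

def ApproximatesUnitBall (v : Valuation K Γ₀) (F : Subfield K) (b : ι → K) (δ : Γ₀) : Prop :=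
  ∀ y ∈ v.integer, ∃ a : ι → F, (∀ i, v (a i : K) ≤ 1) ∧ v (y - ∑ i, a i * b i) ≤ δ

variable {v : Valuation K Γ₀} {F : Subfield K} {b : ι → K}

theorem ApproximatesUnitBall.mono {δ δ' : Γ₀} (h : ApproximatesUnitBall v F b δ) (hδ : δ ≤ δ') :
    ApproximatesUnitBall v F b δ' := fun y hy =>
  (h y hy).imp fun _ ha => ⟨ha.1, ha.2.trans hδ⟩

theorem ApproximatesUnitBall.exists_eq_add_mul {t : K} (ht : t ≠ 0)
    (h : ApproximatesUnitBall v F b (v t)) (x : v.integer) :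
    ∃ (a : ι → F) (z : v.integer), (∀ i, v (a i : K) ≤ 1) ∧ (x : K) = ∑ i, a i * b i + t * z := by
  obtain ⟨a, ha, hx⟩ := h x x.2
  refine ⟨a, ⟨((x : K) - ∑ i, a i * b i) / t, ?_⟩, ha, ?_⟩
  · rw [Valuation.mem_integer_iff, map_div₀]
    exact div_le_one_of_le₀ hx zero_le
  · rw [mul_div_cancel₀ _ ht]
    ring

theorem ApproximatesUnitBall.pow {π : K} (hπ : π ≠ 0) (h : ApproximatesUnitBall v F b (v π))
    (m : ℕ) :
    ApproximatesUnitBall v F (fun p : Fin m × ι => π ^ (p.1 : ℕ) * b p.2) (v π ^ m) := by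
  induction m with
  | zero => exact fun y hy => ⟨0, by simp, by simpa using (v.mem_integer_iff y).1 hy⟩
  | succ m ih =>
    intro y hy
    obtain ⟨a₀, z, ha₀, hyz⟩ := h.exists_eq_add_mul hπ ⟨y, hy⟩
    replace hyz : y = ∑ i, (a₀ i : K) * b i + π * z := hyz
    obtain ⟨a, ha, hz⟩ := ih z z.2
    let a' : Fin (m + 1) → ι → F := Fin.cons a₀ fun j i => a (j, i)
    refine ⟨fun p => a' p.1 p.2, ?_, ?_⟩
    · rintro ⟨j, i⟩
      cases j using Fin.cases <;> simp [a', ha₀, ha]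
    · have hrem : y - ∑ p : Fin (m + 1) × ι, (a' p.1 p.2 : K) * (π ^ (p.1 : ℕ) * b p.2) =
          π * (z - ∑ p : Fin m × ι, a p * (π ^ (p.1 : ℕ) * b p.2)) := by
        rw [hyz]
        simp only [a', Fintype.sum_prod_type, Fin.sum_univ_succ, Fin.cons_zero, Fin.cons_succ,
          Fin.val_zero, Fin.val_succ, pow_zero, one_mul, mul_sub, Finset.mul_sum, pow_succ]
        rw [Finset.sum_congr rfl fun j _ => Finset.sum_congr rfl fun i _ => (by ring :
          (a (j, i) : K) * (π ^ (j : ℕ) * π * b i) = π * (a (j, i) * (π ^ (j : ℕ) * b i)))]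
        ring
      rw [hrem, map_mul, pow_succ']
      gcongr

end Approximation

theorem exists_approximatesUnitBall_of_finite {K : Type*} [Field K] (v : Valuation K NNReal)
    (F : Subfield K) (hfin : (subfieldToResidue v F).Finite) {δ : NNReal}
    (hδ : ∀ y : K, v y < 1 → v y ≤ δ) :
    ∃ (n : ℕ) (c : Fin n → K), ApproximatesUnitBall v F c δ := by
  let := (subfieldToResidue v F).toAlgebra
  have : Module.Finite (v.comap F.subtype).integer (v.integer ⧸ valMaxIdeal v) := hfin
  obtain ⟨n, s, hs⟩ := Module.Finite.exists_fin (R := (v.comap F.subtype).integer)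
    (M := v.integer ⧸ valMaxIdeal v)
  choose c hc using fun i => Ideal.Quotient.mk_surjective (s i)
  refine ⟨n, fun i => c i, fun y hy => ?_⟩
  obtain ⟨a, ha⟩ := (Submodule.mem_span_range_iff_exists_fun _).1
    (hs ▸ Submodule.mem_top : Ideal.Quotient.mk (valMaxIdeal v) ⟨y, hy⟩ ∈ _)
  refine ⟨fun i => a i, fun i => (a i).2, hδ _ ?_⟩
  have hmem : (⟨y, hy⟩ - ∑ i, ⟨(a i : K), (a i).2⟩ * c i : v.integer) ∈ valMaxIdeal v := by
    rw [← Ideal.Quotient.eq_zero_iff_mem, map_sub, map_sum, ← ha, sub_eq_zero]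
    refine Finset.sum_congr rfl fun i _ => ?_
    rw [Algebra.smul_def, map_mul, hc]
    rfl
  change v ((⟨y, hy⟩ - ∑ i, ⟨(a i : K), (a i).2⟩ * c i : v.integer) : K) < 1 at hmem
  simpa using hmem

namespace Valued

variable {K : Type*} [Field K] [Valued K NNReal]

theorem exists_pow_forall_restrict_lt {δ : NNReal} (hδ : δ < 1)
    (γ : (MonoidWithZeroHom.ValueGroup₀ (.ofClass (v : Valuation K NNReal)))ˣ) :
    ∃ N : ℕ, ∀ x : K, v x ≤ δ ^ N → v.restrict x < γ.1 := by
  obtain ⟨N, hN⟩ := exists_pow_lt_of_lt_one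
    (Units.zero_lt (Units.map MonoidWithZeroHom.ValueGroup₀.embedding.toMonoidHom γ)) hδ
  exact ⟨N, fun x hx => (Valuation.restrict_lt_iff_lt_embedding _).2 (hx.trans_lt hN)⟩

theorem tendsto_zero_of_le_pow {f : ℕ → K} {δ : NNReal} (hδ : δ < 1)
    (hf : ∀ k, v (f k) ≤ δ ^ k) : Tendsto f atTop (𝓝 0) := by
  refine (hasBasis_nhds_zero K NNReal).tendsto_right_iff.2 fun γ _ => ?_
  obtain ⟨N, hN⟩ := exists_pow_forall_restrict_lt hδ γ
  filter_upwards [eventually_ge_atTop N] with k hk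
  exact hN _ ((hf k).trans (pow_le_pow_of_le_one zero_le hδ.le hk))

theorem cauchySeq_sum_range_of_le_pow {f : ℕ → K} {δ : NNReal} (hδ : δ < 1)
    (hf : ∀ k, v (f k) ≤ δ ^ k) : CauchySeq fun N => ∑ k ∈ Finset.range N, f k := by
  refine (hasBasis_uniformity K NNReal).cauchySeq_iff'.2 fun γ _ => ?_
  obtain ⟨N, hN⟩ := exists_pow_forall_restrict_lt hδ γ
  refine ⟨N, fun n hn => hN _ ?_⟩
  rw [Valuation.map_sub_swap, ← Finset.sum_Ico_eq_sub _ hn]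
  refine Valuation.map_sum_le _ fun k hk => (hf k).trans ?_
  exact pow_le_pow_of_le_one zero_le hδ.le (Finset.mem_Ico.1 hk).1

end Valued

theorem eq_sum_mul_add_pow_mul_iterate {R X ι : Type*} [CommRing R] [Fintype ι] (f : X → R)
    (b : ι → R) (t : R) (a : X → ι → R) (next : X → X)
    (h : ∀ x, f x = ∑ i, a x i * b i + t * f (next x)) (x : X) (N : ℕ) :
    f x = ∑ i, (∑ k ∈ Finset.range N, a (next^[k] x) i * t ^ k) * b i + t ^ N * f (next^[N] x) := by
  induction N with
  | zero => simp
  | succ N ih =>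
    refine ih.trans ?_
    rw [h (next^[N] x), Function.iterate_succ_apply']
    simp only [Finset.sum_range_succ, add_mul, Finset.sum_add_distrib, mul_add, Finset.mul_sum]
    rw [Finset.sum_congr rfl fun i _ => (by ring :
      t ^ N * (a (next^[N] x) i * b i) = a (next^[N] x) i * t ^ N * b i)]
    ring

theorem ApproximatesUnitBall.mem_span {K : Type*} [Field K] [Valued K NNReal] {F : Subfield K}
    [CompleteSpace F] {ι : Type*} [Fintype ι] {b : ι → K} {t : F} (ht0 : t ≠ 0)
    (ht1 : Valued.v (t : K) < 1) (h : ApproximatesUnitBall Valued.v F b (Valued.v (t : K)))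
    {y : K} (hy : y ∈ Valued.v.integer) : y ∈ Submodule.span F (Set.range b) := by
  have htK : (t : K) ≠ 0 := by exact_mod_cast ht0
  choose a next ha hnext using h.exists_eq_add_mul htK
  have hexpand := eq_sum_mul_add_pow_mul_iterate Subtype.val b (t : K)
    (fun x i => (a x i : K)) next hnext ⟨y, hy⟩
  let s : ℕ → (Valued.v : Valuation K NNReal).integer := fun k => next^[k] ⟨y, hy⟩
  have hconv : ∀ i, ∃ β : F, Tendsto (fun N => ∑ k ∈ Finset.range N, (a (s k) i : K) * t ^ k)
      atTop (𝓝 (β : K)) := by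
    intro i
    obtain ⟨β, hβ, hlim⟩ := cauchySeq_tendsto_of_isComplete
      (completeSpace_coe_iff_isComplete.1 ‹CompleteSpace F›)
      (fun N => F.sum_mem fun k _ => F.mul_mem (a (s k) i).2 (F.pow_mem t.2 k))
      (Valued.cauchySeq_sum_range_of_le_pow ht1 fun k => by
        rw [map_mul, map_pow]
        exact mul_le_of_le_one_left zero_le (ha (s k) i))
    exact ⟨⟨β, hβ⟩, hlim⟩
  choose β hβ using hconv
  have hrem : Tendsto (fun N => (t : K) ^ N * s N) atTop (𝓝 0) :=
    Valued.tendsto_zero_of_le_pow ht1 fun N => by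
      rw [map_mul, map_pow]
      exact mul_le_of_le_one_right zero_le (s N).2
  have hy_eq : y = ∑ i, (β i : K) * b i + 0 :=
    tendsto_nhds_unique tendsto_const_nhds <| Tendsto.congr (fun N => (hexpand N).symm)
      ((tendsto_finsetSum _ fun i _ => (hβ i).mul_const (b i)).add hrem)
  rw [hy_eq, add_zero]
  exact (Submodule.mem_span_range_iff_exists_fun F).2 ⟨β, rfl⟩

theorem Submodule.eq_top_of_integer_subset {K : Type*} [Field K] {v : Valuation K NNReal}
    {F : Subfield K} (V : Submodule F K) {t : F} (ht0 : t ≠ 0) (ht1 : v (t : K) < 1)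
    (hV : (v.integer : Set K) ⊆ V) : V = ⊤ := by
  refine eq_top_iff'.2 fun x => ?_
  rcases eq_or_ne x 0 with rfl | hx
  · exact V.zero_mem
  obtain ⟨k, hk⟩ := exists_pow_lt_of_lt_one
    (inv_pos.2 (pos_iff_ne_zero.2 (v.ne_zero_iff.2 hx))) ht1
  have hkx : t ^ k • x ∈ V := hV <| by
    rw [SetLike.mem_coe, Valuation.mem_integer_iff, Subfield.smul_def, smul_eq_mul, map_mul,
      SubmonoidClass.coe_pow, map_pow]
    exact ((NNReal.lt_inv_iff_mul_lt (v.ne_zero_iff.2 hx)).1 hk).le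
  exact (V.smul_mem_iff (pow_ne_zero k ht0)).1 hkx

theorem ApproximatesUnitBall.finiteDimensional {K : Type*} [Field K] [Valued K NNReal]
    {F : Subfield K} [CompleteSpace F] {ι : Type*} [Fintype ι] {b : ι → K} {t : F}
    (ht0 : t ≠ 0) (ht1 : Valued.v (t : K) < 1)
    (h : ApproximatesUnitBall Valued.v F b (Valued.v (t : K))) : FiniteDimensional F K := by
  have hspan : Submodule.span F (Set.range b) = ⊤ :=
    Submodule.eq_top_of_integer_subset _ ht0 ht1 fun _ hy => h.mem_span ht0 ht1 hy
  exact Module.Finite.of_fg_top (hspan ▸ Submodule.fg_span (Set.finite_range b))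

theorem stmt2_general (K : Type*) [Field K] [Valued K NNReal]
    (r : NNReal) (hr1 : r ≠ 1)
    (hsub : ∀ x : K, x ≠ 0 → ∃ m : ℤ, Valued.v x = r ^ m)
    (hgen : ∃ x : K, x ≠ 0 ∧ Valued.v x = r)
    (F : Subfield K) [CompleteSpace F]
    (hFnontriv : ∃ x : F, x ≠ 0 ∧ Valued.v (x : K) ≠ 1)
    (hresfin : (subfieldToResidue (Valued.v : Valuation K NNReal) F).Finite) :
    FiniteDimensional F K := by
  obtain ⟨π, hπ0, hπ1, hπ⟩ := Valued.v.exists_uniformizer_of_forall_eq_zpow hr1 hsub hgen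
  obtain ⟨x, hx0, hx1⟩ := hFnontriv
  obtain ⟨t, ht0, ht1⟩ : ∃ t : F, t ≠ 0 ∧ Valued.v (t : K) < 1 :=
    (Valuation.isNontrivial_iff_exists_lt_one ((Valued.v : Valuation K NNReal).comap F.subtype)).1
      (Valuation.isNontrivial_iff_exists_unit.2 ⟨Units.mk0 x hx0, hx1⟩)
  obtain ⟨n, c, hc⟩ := exists_approximatesUnitBall_of_finite _ F hresfin hπ
  obtain ⟨m, hm⟩ : ∃ m : ℕ, Valued.v π ^ m < Valued.v (t : K) := exists_pow_lt_of_lt_one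
    (pos_iff_ne_zero.2 (Valued.v.ne_zero_iff.2 (Subtype.coe_ne_coe.2 ht0))) hπ1
  exact ((hc.pow hπ0 m).mono hm.le).finiteDimensional ht0 ht1

/-- Let `K` be a field complete with respect to a nonarchimedean absolute value whose
value group `|K*|` is nontrivial and free of rank one, generated by a single real number
`r ≠ 1`. Let `F` be a complete subfield of `K` with `|F*| ≠ {1}`. If the residue field
extension of `F` inside the residue field of `K` is finite, then `K` is a finite field
extension of `F`. -/
theorem stmt2 (K : Type*) [Field K] [Valued K NNReal] [CompleteSpace K]
    (r : NNReal) (hr0 : r ≠ 0) (hr1 : r ≠ 1)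
    (hsub : ∀ x : K, x ≠ 0 → ∃ m : ℤ, Valued.v x = r ^ m)
    (hgen : ∃ x : K, x ≠ 0 ∧ Valued.v x = r)
    (F : Subfield K) [CompleteSpace F]
    (hFnontriv : ∃ x : F, x ≠ 0 ∧ Valued.v (x : K) ≠ 1)
    (hresfin : (subfieldToResidue (Valued.v : Valuation K NNReal) F).Finite) :
    FiniteDimensional F K :=
  stmt2_general K r hr1 hsub hgen F hFnontriv hresfin
end

section
/- Let F be a field equipped with a valuation v with values in a linearly ordered commutative group with zero (written multiplicatively), and let P = T^n + a_{n-1}T^{n-1} + ⋯ + a_0 be a monic polynomial in F[T] which splits in F; set a_n = 1. Then the following are equivalent: (i) v(λ) > 1 for every root λ of P in F; (ii) v(a_0) > v(a_j) for every j with 0 < j ≤ n. -/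
/-!
If every root has valuation `> 1`, then multiplying by a factor `X - a` with `v a > 1` preserves
the property that the constant coefficient strictly dominates all others: the new constant
coefficient `-a c₀` has valuation `v a · v c₀`, which beats both `v cₖ` and `v (a cₖ₊₁)`.
Since `P` splits, it is the product of such factors. Conversely, if `v c₀` dominates, then at a
point `λ` with `v λ ≤ 1` every term `cₖ λᵏ` with `k > 0` has valuation below `v c₀`, so by the
ultrametric inequality `v (P λ) = v c₀ ≠ 0` and `λ` is not a root.
-/

open Polynomial

namespace Valuation

variable {R Γ : Type*} [LinearOrderedCommGroupWithZero Γ]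

theorem map_coeff_lt_map_coeff_zero_X_sub_C_mul [Ring R] (v : Valuation R Γ) {a : R}
    (ha : 1 < v a) {Q : R[X]} (hQ : ∀ k, 0 < k → v (Q.coeff k) < v (Q.coeff 0)) :
    ∀ k, 0 < k → v (((X - C a) * Q).coeff k) < v (((X - C a) * Q).coeff 0) := by
  have ha0 : v a ≠ 0 := (zero_lt_one.trans ha).ne'
  have hQ0 : v (Q.coeff 0) ≠ 0 := ((zero_le).trans_lt (hQ 1 one_pos)).ne'
  have hQ_le : ∀ k, v (Q.coeff k) ≤ v (Q.coeff 0) := fun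
    | 0 => le_rfl
    | k + 1 => (hQ (k + 1) k.succ_pos).le
  have hcoeff_zero : v (((X - C a) * Q).coeff 0) = v a * v (Q.coeff 0) := by
    simp [mul_coeff_zero]
  rintro (_ | k) hk
  · exact absurd hk (lt_irrefl 0)
  rw [hcoeff_zero, sub_mul, coeff_sub, coeff_X_mul, coeff_C_mul]
  refine (v.map_sub _ _).trans_lt (max_lt ?_ ?_)
  · calc v (Q.coeff k) ≤ v (Q.coeff 0) := hQ_le k
      _ = 1 * v (Q.coeff 0) := (one_mul _).symm
      _ < v a * v (Q.coeff 0) := mul_lt_mul_of_pos_right ha (zero_lt_iff.2 hQ0)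
  · rw [map_mul]
    exact mul_lt_mul_of_pos_left (hQ (k + 1) k.succ_pos) (zero_lt_iff.2 ha0)

theorem map_coeff_lt_map_coeff_zero_prod_X_sub_C [CommRing R] (v : Valuation R Γ)
    {s : Multiset R} (hs : ∀ a ∈ s, 1 < v a) :
    ∀ k, 0 < k → v ((s.map (X - C ·)).prod.coeff k) < v ((s.map (X - C ·)).prod.coeff 0) := by
  induction s using Multiset.induction_on with
  | empty => simp +contextual [coeff_one, Nat.pos_iff_ne_zero]
  | cons a s ih =>
    rw [Multiset.map_cons, Multiset.prod_cons]
    exact v.map_coeff_lt_map_coeff_zero_X_sub_C_mul (hs a (Multiset.mem_cons_self a s))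
      (ih fun b hb => hs b (Multiset.mem_cons_of_mem hb))

theorem one_lt_of_isRoot_of_map_coeff_lt_map_coeff_zero [Ring R] (v : Valuation R Γ)
    {P : R[X]} (hP : ∀ k, 0 < k → v (P.coeff k) < v (P.coeff 0)) {l : R} (hl : P.IsRoot l) :
    1 < v l := by
  by_contra! hl1
  have hP0 : v (P.coeff 0) ≠ 0 := ((zero_le).trans_lt (hP 1 one_pos)).ne'
  have htail : v (∑ i ∈ Finset.range P.natDegree, P.coeff (i + 1) * l ^ (i + 1))
      < v (P.coeff 0) := by
    refine v.map_sum_lt hP0 fun i _ => ?_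
    calc v (P.coeff (i + 1) * l ^ (i + 1)) = v (P.coeff (i + 1)) * v l ^ (i + 1) := by
          rw [map_mul, map_pow]
      _ ≤ v (P.coeff (i + 1)) := mul_le_of_le_one_right' (pow_le_one' hl1 _)
      _ < v (P.coeff 0) := hP (i + 1) i.succ_pos
  have heval : v (P.eval l) = v (P.coeff 0) := by
    rw [eval_eq_sum_range, Finset.sum_range_succ', pow_zero, mul_one]
    exact v.map_add_eq_of_lt_right htail
  rw [hl.eq_zero, map_zero] at heval
  exact hP0 heval.symm

end Valuation

theorem Polynomial.Monic.map_coeff_lt_map_coeff_zero_of_le_natDegree {R Γ : Type*} [Ring R]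
    [LinearOrderedCommGroupWithZero Γ] (v : Valuation R Γ) {P : R[X]} (hP : P.Monic)
    (h : ∀ j, 0 < j → j ≤ P.natDegree → v (P.coeff j) < v (P.coeff 0)) :
    ∀ j, 0 < j → v (P.coeff j) < v (P.coeff 0) := by
  intro j hj
  rcases le_or_gt j P.natDegree with hjn | hjn
  · exact h j hj hjn
  rw [coeff_eq_zero_of_natDegree_lt hjn, v.map_zero]
  rcases Nat.eq_zero_or_pos P.natDegree with hn | hn
  · simp [hP.natDegree_eq_zero.mp hn]
  · exact (zero_le).trans_lt (h _ hn le_rfl)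

/-- Let `v` be a valuation on a field `F` and `P` a monic polynomial over `F` which splits
in `F`. Then `v(λ) > 1` for every root `λ` of `P` iff `v(a₀) > v(a_j)` for every
`0 < j ≤ n = deg P` (where `a_j` are the coefficients of `P`, with `a_n = 1`). -/
theorem stmt4 (F : Type*) [Field F] (Γ : Type*) [LinearOrderedCommGroupWithZero Γ]
    (v : Valuation F Γ) (P : Polynomial F) (hmonic : P.Monic)
    (hsplit : P.Splits) :
    (∀ l : F, P.IsRoot l → 1 < v l) ↔
      (∀ j : ℕ, 0 < j → j ≤ P.natDegree → v (P.coeff j) < v (P.coeff 0)) := by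
  constructor
  · intro hroots j hj _
    have hprod := v.map_coeff_lt_map_coeff_zero_prod_X_sub_C
      fun a ha => hroots a (isRoot_of_mem_roots ha)
    rw [← hsplit.eq_prod_roots_of_monic hmonic] at hprod
    exact hprod j hj
  · intro hcoeff l hl
    exact v.one_lt_of_isRoot_of_map_coeff_lt_map_coeff_zero
      (hmonic.map_coeff_lt_map_coeff_zero_of_le_natDegree v hcoeff) hl
end

section
/- Let K, E, L, F be fields with K ⊆ E ⊆ F and K ⊆ L ⊆ F, and suppose the natural map E ⊗_K L → F is injective. Let A be a valuation subring of K, let B be a valuation subring of L with B ∩ K = A, and let C be a valuation subring of E with C ∩ K = A. Then there exists a valuation subring D of F such that D ∩ E = C and D ∩ L = B. -/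
/-!
Let `S ⊆ F` be the ring generated by `C` and `B`, and `J = 𝔪_C S + 𝔪_B S`. If `J` is proper,
a valuation ring `D` of `F` dominating the localization of `S` at a maximal ideal containing `J`
works: for `x ∈ E \ C` we get `x⁻¹ ∈ 𝔪_C ⊆ 𝔪_D`, so `x ∉ D`, and likewise for `L`.

That `1 ∉ J` follows from: a sum `∑ cᵢ bᵢ` with `cᵢ ∈ C`, `bᵢ ∈ B`, each `cᵢ ∈ 𝔪_C` or
`bᵢ ∈ 𝔪_B`, which equals some `u ∈ E`, has `u ∈ 𝔪_C`. Induct on the number of terms. If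
`1, b₁, …, bₙ` are linearly independent over `K`, injectivity of `E ⊗_K L → F` gives `u = 0`.
Otherwise take a `K`-relation among them with coefficients in `A`, one of them `1`; using
`B ∩ K = A = C ∩ K` the pivot can be chosen so that eliminating it keeps the shape of the sum
and changes `u` only by an element of `𝔪_C`.
-/

theorem Fin.sum_succAbove_sub_mul_mul_eq {R : Type*} [CommRing R] {n : ℕ}
    {x y z : Fin (n + 1) → R} {s t : R} (hsum : ∑ i, x i * y i = s)
    (hrel : t + ∑ i, z i * y i = 0) {p : Fin (n + 1)} (hp : z p = 1) :
    ∑ i : Fin n, (x (p.succAbove i) - x p * z (p.succAbove i)) * y (p.succAbove i) =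
      s + x p * t := by
  rw [Fin.sum_univ_succAbove _ p] at hsum hrel
  simp only [sub_mul, Finset.sum_sub_distrib, mul_assoc, ← Finset.mul_sum]
  linear_combination hsum - x p * hrel + x p * y p * hp

namespace ValuationSubring

variable {K L : Type*} [Field K] [Field L]

theorem mul_mem_nonunits {A : ValuationSubring K} {c x : K} (hc : c ∈ A) (hx : x ∈ A.nonunits) :
    c * x ∈ A.nonunits := by
  rw [mem_nonunits_iff, map_mul]
  exact (mul_le_of_le_one_left' ((A.valuation_le_one_iff c).mpr hc)).trans_lt hx

theorem algebraMap_mem_nonunits_iff [Algebra K L] {A : ValuationSubring K}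
    {B : ValuationSubring L} (hBA : ∀ x : K, algebraMap K L x ∈ B ↔ x ∈ A) (a : K) :
    algebraMap K L a ∈ B.nonunits ↔ a ∈ A.nonunits := by
  simp only [mem_nonunits_iff_or, ← map_inv₀, hBA, map_eq_zero]

end ValuationSubring

open ValuationSubring (mul_mem_nonunits algebraMap_mem_nonunits_iff nonunits_subset
  mem_nonunits_iff_or valuation_le_one_iff)

section Relation

variable {K L : Type*} [Field K] [Field L] [Algebra K L] {A : ValuationSubring K}
  {B : ValuationSubring L} {ι : Type*} [Fintype ι] {b : ι → L}

theorem mem_of_relation (hBA : ∀ x : K, algebraMap K L x ∈ B ↔ x ∈ A)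
    (hb : ∀ i, b i ∈ B) {μ₀ : K} {μ : ι → K} (hrel : μ₀ • (1 : L) + ∑ i, μ i • b i = 0)
    (hμ : ∀ i, μ i ∈ A) : μ₀ ∈ A := by
  rw [← hBA, Algebra.algebraMap_eq_smul_one, eq_neg_of_add_eq_zero_left hrel]
  refine neg_mem (sum_mem fun i _ => ?_)
  rw [Algebra.smul_def]
  exact mul_mem ((hBA _).mpr (hμ i)) (hb i)

theorem mem_nonunits_of_relation (hBA : ∀ x : K, algebraMap K L x ∈ B ↔ x ∈ A)
    (hb : ∀ i, b i ∈ B) {μ₀ : K} {μ : ι → K} (hrel : μ₀ • (1 : L) + ∑ i, μ i • b i = 0)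
    (hμ : ∀ i, μ i ∈ A) (hμb : ∀ i, b i ∉ B.nonunits → μ i ∈ A.nonunits) : μ₀ ∈ A.nonunits := by
  rw [← algebraMap_mem_nonunits_iff hBA, Algebra.algebraMap_eq_smul_one,
    eq_neg_of_add_eq_zero_left hrel]
  refine neg_mem (sum_mem fun i _ => ?_)
  rw [Algebra.smul_def]
  by_cases hbi : b i ∈ B.nonunits
  · exact mul_mem_nonunits ((hBA _).mpr (hμ i)) hbi
  · rw [mul_comm]
    exact mul_mem_nonunits (hb i) ((algebraMap_mem_nonunits_iff hBA _).mpr (hμb i hbi))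

theorem exists_relation_pivot (hBA : ∀ x : K, algebraMap K L x ∈ B ↔ x ∈ A)
    (hb : ∀ i, b i ∈ B) {μ₀ : K} {μ : ι → K} (hrel : μ₀ • (1 : L) + ∑ i, μ i • b i = 0)
    (hμ : ∃ i, μ i ≠ 0) :
    ∃ (ν₀ : K) (ν : ι → K) (p : ι), ν₀ • (1 : L) + ∑ i, ν i • b i = 0 ∧ ν p = 1 ∧
      (∀ i, ν i ∈ A) ∧
      (b p ∉ B.nonunits ∨ ν₀ ∈ A.nonunits ∧ ∀ i, b i ∉ B.nonunits → ν i ∈ A.nonunits) := by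
  have hscale : ∀ {ν₀ : K} {ν : ι → K} (t : K), ν₀ • (1 : L) + ∑ i, ν i • b i = 0 →
      (t * ν₀) • (1 : L) + ∑ i, (t * ν i) • b i = 0 := fun t h => by
    simpa only [smul_add, Finset.smul_sum, smul_smul, smul_zero] using congrArg (t • ·) h
  obtain ⟨i₀, hi₀⟩ := hμ
  have : Nonempty ι := ⟨i₀⟩
  obtain ⟨p, hp⟩ := Finite.exists_max fun i => A.valuation (μ i)
  have hp0 : μ p ≠ 0 := fun h => by
    have := hp i₀
    rw [h, map_zero, le_zero_iff, Valuation.zero_iff] at this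
    exact hi₀ this
  have hnorm : ∀ i, (μ p)⁻¹ * μ i ∈ A := fun i => by
    rw [← valuation_le_one_iff, map_mul, map_inv₀,
      inv_mul_le_one₀ ((Valuation.pos_iff _).mpr hp0)]
    exact hp i
  have hrel' := hscale (μ p)⁻¹ hrel
  -- A unit coefficient at a unit `b q` can serve as pivot; if there is none, the relation
  -- forces the constant term into `𝔪_A`.
  by_cases hunit : ∃ q, b q ∉ B.nonunits ∧ (μ p)⁻¹ * μ q ∉ A.nonunits
  · obtain ⟨q, hbq, hq⟩ := hunit
    obtain ⟨hq0, hqinv⟩ : (μ p)⁻¹ * μ q ≠ 0 ∧ ((μ p)⁻¹ * μ q)⁻¹ ∈ A := by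
      simpa [mem_nonunits_iff_or] using hq
    exact ⟨_, _, q, hscale _ hrel', inv_mul_cancel₀ hq0,
      fun i => mul_mem hqinv (hnorm i), Or.inl hbq⟩
  · push Not at hunit
    exact ⟨_, _, p, hrel', inv_mul_cancel₀ hp0, hnorm,
      Or.inr ⟨mem_nonunits_of_relation hBA hb hrel' hnorm hunit, hunit⟩⟩

theorem exists_relation_of_not_linearIndependent {n : ℕ} {b : Fin n → L}
    (h : ¬LinearIndependent K (Fin.cons (1 : L) b)) :
    ∃ (μ₀ : K) (μ : Fin n → K), μ₀ • (1 : L) + ∑ i, μ i • b i = 0 ∧ ∃ i, μ i ≠ 0 := by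
  obtain ⟨g, hg, j, hj⟩ := Fintype.not_linearIndependent_iff.mp h
  rw [Fin.sum_univ_succ] at hg
  simp only [Fin.cons_zero, Fin.cons_succ] at hg
  refine ⟨g 0, fun i => g i.succ, hg, ?_⟩
  by_contra! h0
  cases j using Fin.cases with
  | zero => exact hj (by simpa [h0] using hg)
  | succ i => exact hj (h0 i)

end Relation

section ProductSubring

variable (F) {E L : Type*} [Field E] [Field L] [Field F] [Algebra E F] [Algebra L F]
  (C : ValuationSubring E) (B : ValuationSubring L)

def productSubring : Subring F :=
  Subring.closure (Set.image2 (fun c b => algebraMap E F c * algebraMap L F b) C B)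

def nonunitSums : AddSubmonoid F :=
  AddSubmonoid.closure {z | ∃ c ∈ C, ∃ b ∈ B, (c ∈ C.nonunits ∨ b ∈ B.nonunits) ∧
    algebraMap E F c * algebraMap L F b = z}

variable {F C B}

theorem algebraMap_mem_productSubring_left {c : E} (hc : c ∈ C) :
    algebraMap E F c ∈ productSubring F C B :=
  Subring.subset_closure ⟨c, hc, 1, one_mem B, by simp⟩

theorem algebraMap_mem_productSubring_right {b : L} (hb : b ∈ B) :
    algebraMap L F b ∈ productSubring F C B :=
  Subring.subset_closure ⟨1, one_mem C, b, hb, by simp⟩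

theorem algebraMap_mem_nonunitSums_left {c : E} (hc : c ∈ C.nonunits) :
    algebraMap E F c ∈ nonunitSums F C B :=
  AddSubmonoid.subset_closure ⟨c, nonunits_subset hc, 1, one_mem B, Or.inl hc, by simp⟩

theorem algebraMap_mem_nonunitSums_right {b : L} (hb : b ∈ B.nonunits) :
    algebraMap L F b ∈ nonunitSums F C B :=
  AddSubmonoid.subset_closure ⟨1, one_mem C, b, nonunits_subset hb, Or.inr hb, by simp⟩

theorem neg_mem_nonunitSums {z : F} (hz : z ∈ nonunitSums F C B) : -z ∈ nonunitSums F C B := by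
  induction hz using AddSubmonoid.closure_induction with
  | mem _ hz =>
    obtain ⟨c, hc, b, hb, hcb, rfl⟩ := hz
    refine AddSubmonoid.subset_closure ⟨-c, neg_mem hc, b, hb, hcb.imp_left neg_mem, ?_⟩
    rw [map_neg, neg_mul]
  | zero => simp
  | add _ _ _ _ hx hy => simpa [add_comm] using add_mem hx hy

theorem mul_mem_nonunitSums {s z : F} (hs : s ∈ productSubring F C B)
    (hz : z ∈ nonunitSums F C B) : s * z ∈ nonunitSums F C B := by
  induction hs using Subring.closure_induction generalizing z with
  | mem _ hs =>
    obtain ⟨c, hc, b, hb, rfl⟩ := hs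
    induction hz using AddSubmonoid.closure_induction with
    | mem _ hz =>
      obtain ⟨c', hc', b', hb', hcb', rfl⟩ := hz
      refine AddSubmonoid.subset_closure ⟨c * c', mul_mem hc hc', b * b', mul_mem hb hb',
        hcb'.imp (mul_mem_nonunits hc) (mul_mem_nonunits hb), ?_⟩
      simp only [map_mul]
      ring
    | zero => simp
    | add _ _ _ _ hx hy => simpa [mul_add] using add_mem hx hy
  | zero => simp
  | one => simpa using hz
  | add _ _ _ _ hx hy => simpa [add_mul] using add_mem (hx hz) (hy hz)
  | neg _ _ hx => simpa using neg_mem_nonunitSums (hx hz)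
  | mul _ _ _ _ hx hy => simpa [mul_assoc] using hx (hy hz)

variable (F C B)

def nonunitIdeal : Ideal (productSubring F C B) where
  carrier := {s | (s : F) ∈ nonunitSums F C B}
  add_mem' := (nonunitSums F C B).add_mem
  zero_mem' := (nonunitSums F C B).zero_mem
  smul_mem' r _ hs := mul_mem_nonunitSums r.2 hs

variable {F C B}

theorem mem_nonunitIdeal {s : productSubring F C B} :
    s ∈ nonunitIdeal F C B ↔ (s : F) ∈ nonunitSums F C B :=
  Iff.rfl

theorem exists_sum_eq_of_mem_nonunitSums {z : F} (hz : z ∈ nonunitSums F C B) :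
    ∃ (n : ℕ) (c : Fin n → E) (b : Fin n → L), (∀ i, c i ∈ C) ∧ (∀ i, b i ∈ B) ∧
      (∀ i, c i ∈ C.nonunits ∨ b i ∈ B.nonunits) ∧
      ∑ i, algebraMap E F (c i) * algebraMap L F (b i) = z := by
  obtain ⟨l, hl, rfl⟩ := AddSubmonoid.exists_list_of_mem_closure hz
  choose c hc b hb hcb heq using fun i : Fin l.length => hl _ (l.get_mem i)
  refine ⟨_, c, b, hc, hb, hcb, ?_⟩
  rw [Finset.sum_congr rfl fun i _ => heq i, ← List.sum_ofFn, List.ofFn_get]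

theorem algebraMap_mem_iff_left {D : ValuationSubring F} (hSD : productSubring F C B ≤ D.toSubring)
    (hID : (productSubring F C B).subtype '' nonunitIdeal F C B ⊆ D.nonunits) (x : E) :
    algebraMap E F x ∈ D ↔ x ∈ C := by
  refine ⟨fun hx => by_contra fun hxC => ?_, fun hx => hSD (algebraMap_mem_productSubring_left hx)⟩
  have hinv : x⁻¹ ∈ C.nonunits := C.inv_mem_nonunits_iff.mpr (Or.inr hxC)
  have hD : (algebraMap E F x)⁻¹ ∈ D.nonunits := by
    rw [← map_inv₀]
    exact hID ⟨⟨_, algebraMap_mem_productSubring_left (nonunits_subset hinv)⟩,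
      mem_nonunitIdeal.mpr (algebraMap_mem_nonunitSums_left hinv), rfl⟩
  rcases D.inv_mem_nonunits_iff.mp hD with h | h
  · exact hxC ((map_eq_zero _).mp h ▸ zero_mem C)
  · exact h hx

theorem algebraMap_mem_iff_right {D : ValuationSubring F} (hSD : productSubring F C B ≤ D.toSubring)
    (hID : (productSubring F C B).subtype '' nonunitIdeal F C B ⊆ D.nonunits) (x : L) :
    algebraMap L F x ∈ D ↔ x ∈ B := by
  refine ⟨fun hx => by_contra fun hxB => ?_, fun hx => hSD (algebraMap_mem_productSubring_right hx)⟩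
  have hinv : x⁻¹ ∈ B.nonunits := B.inv_mem_nonunits_iff.mpr (Or.inr hxB)
  have hD : (algebraMap L F x)⁻¹ ∈ D.nonunits := by
    rw [← map_inv₀]
    exact hID ⟨⟨_, algebraMap_mem_productSubring_right (nonunits_subset hinv)⟩,
      mem_nonunitIdeal.mpr (algebraMap_mem_nonunitSums_right hinv), rfl⟩
  rcases D.inv_mem_nonunits_iff.mp hD with h | h
  · exact hxB ((map_eq_zero _).mp h ▸ zero_mem B)
  · exact h hx

end ProductSubring

section Core

variable {K E L F : Type*} [Field K] [Field E] [Field L] [Field F]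
  [Algebra K E] [Algebra K L] [Algebra K F] [Algebra E F] [Algebra L F]
  [IsScalarTower K E F] [IsScalarTower K L F]
  {A : ValuationSubring K} {B : ValuationSubring L} {C : ValuationSubring E}

theorem eq_zero_of_sum_algebraMap_mul_eq_zero
    (hinj : Function.Injective (Algebra.TensorProduct.productMap
      (IsScalarTower.toAlgHom K E F) (IsScalarTower.toAlgHom K L F)))
    {ι : Type*} [Fintype ι] {v : ι → L} (hv : LinearIndependent K v) {d : ι → E}
    (h : ∑ i, algebraMap E F (d i) * algebraMap L F (v i) = 0) : d = 0 := by
  have hv' := Module.Flat.linearIndependent_one_tmul (S := E) hv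
  refine funext (Fintype.linearIndependent_iff.mp hv' d (hinj ?_))
  simpa [TensorProduct.smul_tmul', Algebra.TensorProduct.productMap_apply_tmul] using h

theorem mem_nonunits_of_sum_eq
    (hinj : Function.Injective (Algebra.TensorProduct.productMap
      (IsScalarTower.toAlgHom K E F) (IsScalarTower.toAlgHom K L F)))
    (hBA : ∀ x : K, algebraMap K L x ∈ B ↔ x ∈ A) (hCA : ∀ x : K, algebraMap K E x ∈ C ↔ x ∈ A) :
    ∀ {n : ℕ} (c : Fin n → E) (b : Fin n → L), (∀ i, c i ∈ C) → (∀ i, b i ∈ B) →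
      (∀ i, c i ∈ C.nonunits ∨ b i ∈ B.nonunits) → ∀ {u : E},
      ∑ i, algebraMap E F (c i) * algebraMap L F (b i) = algebraMap E F u → u ∈ C.nonunits
  | 0, _, _, _, _, _, u, hu => by
    rw [Finset.univ_eq_empty, Finset.sum_empty, eq_comm, map_eq_zero] at hu
    exact hu ▸ zero_mem _
  | n + 1, c, b, hc, hb, hcb, u, hu => by
    by_cases hind : LinearIndependent K (Fin.cons (1 : L) b)
    · have h0 := congrFun (eq_zero_of_sum_algebraMap_mul_eq_zero hinj hind
        (d := Fin.cons (-u) c) (by simp [Fin.sum_univ_succ, hu])) 0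
      rw [Fin.cons_zero, Pi.zero_apply, neg_eq_zero] at h0
      exact h0 ▸ zero_mem _
    obtain ⟨μ₀, μ, hrel, hμ⟩ := exists_relation_of_not_linearIndependent hind
    obtain ⟨ν₀, ν, p, hrel, hp, hν, hpivot⟩ := exists_relation_pivot hBA hb hrel hμ
    have hcp : ∀ a ∈ A, (b p ∉ B.nonunits ∨ a ∈ A.nonunits) →
        c p * algebraMap K E a ∈ C.nonunits := by
      rintro a ha (hbp | ha')
      · rw [mul_comm]
        exact mul_mem_nonunits ((hCA a).mpr ha) ((hcb p).resolve_right hbp)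
      · exact mul_mem_nonunits (hc p) ((algebraMap_mem_nonunits_iff hCA a).mpr ha')
    have hsum : ∑ i : Fin n, algebraMap E F (c (p.succAbove i) -
          c p * algebraMap K E (ν (p.succAbove i))) * algebraMap L F (b (p.succAbove i)) =
        algebraMap E F (u + c p * algebraMap K E ν₀) := by
      simp only [map_sub, map_add, map_mul, ← IsScalarTower.algebraMap_apply]
      refine Fin.sum_succAbove_sub_mul_mul_eq (z := fun i => algebraMap K F (ν i)) hu ?_
        (by simp [hp])
      simpa [Algebra.smul_def, ← IsScalarTower.algebraMap_apply] using
        congrArg (algebraMap L F) hrel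
    have hgood : ∀ i : Fin n, c (p.succAbove i) - c p * algebraMap K E (ν (p.succAbove i)) ∈
        C.nonunits ∨ b (p.succAbove i) ∈ B.nonunits := fun i => by
      by_cases hbi : b (p.succAbove i) ∈ B.nonunits
      · exact Or.inr hbi
      · exact Or.inl (sub_mem ((hcb _).resolve_right hbi)
          (hcp _ (hν _) (hpivot.imp_right fun h => h.2 _ hbi)))
    have hu' := mem_nonunits_of_sum_eq hinj hBA hCA _ _
      (fun i => sub_mem (hc _) (mul_mem (hc p) ((hCA _).mpr (hν _)))) (fun i => hb _) hgood hsum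
    simpa using sub_mem hu' (hcp ν₀ (mem_of_relation hBA hb hrel hν) (hpivot.imp_right And.left))

theorem nonunitIdeal_ne_top
    (hinj : Function.Injective (Algebra.TensorProduct.productMap
      (IsScalarTower.toAlgHom K E F) (IsScalarTower.toAlgHom K L F)))
    (hBA : ∀ x : K, algebraMap K L x ∈ B ↔ x ∈ A) (hCA : ∀ x : K, algebraMap K E x ∈ C ↔ x ∈ A) :
    nonunitIdeal F C B ≠ ⊤ := by
  rw [Ideal.ne_top_iff_one, mem_nonunitIdeal]
  intro h1
  obtain ⟨n, c, b, hc, hb, hcb, hsum⟩ := exists_sum_eq_of_mem_nonunitSums h1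
  have := mem_nonunits_of_sum_eq hinj hBA hCA c b hc hb hcb (u := 1) (by simpa using hsum)
  simp [ValuationSubring.mem_nonunits_iff] at this

end Core

/-- Let `K ⊆ E ⊆ F` and `K ⊆ L ⊆ F` be fields such that the natural map `E ⊗_K L → F` is
injective. Let `A`, `B`, `C` be valuation subrings of `K`, `L`, `E` respectively with
`B ∩ K = A` and `C ∩ K = A`. Then there is a valuation subring `D` of `F` with
`D ∩ E = C` and `D ∩ L = B`. -/
theorem stmt6 (K E L F : Type*) [Field K] [Field E] [Field L] [Field F]
    [Algebra K E] [Algebra K L] [Algebra K F] [Algebra E F] [Algebra L F]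
    [IsScalarTower K E F] [IsScalarTower K L F]
    (hinj : Function.Injective
      (Algebra.TensorProduct.productMap (IsScalarTower.toAlgHom K E F)
        (IsScalarTower.toAlgHom K L F)))
    (A : ValuationSubring K) (B : ValuationSubring L) (C : ValuationSubring E)
    (hBA : ∀ x : K, algebraMap K L x ∈ B ↔ x ∈ A)
    (hCA : ∀ x : K, algebraMap K E x ∈ C ↔ x ∈ A) :
    ∃ D : ValuationSubring F,
      (∀ x : E, algebraMap E F x ∈ D ↔ x ∈ C) ∧
      (∀ x : L, algebraMap L F x ∈ D ↔ x ∈ B) := by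
  obtain ⟨D, hSD, hID⟩ :=
    Ideal.image_subset_nonunits_valuationSubring _ (nonunitIdeal_ne_top hinj hBA hCA)
  exact ⟨D, algebraMap_mem_iff_left hSD hID, algebraMap_mem_iff_right hSD hID⟩
end

section
/- Let A → B be a local homomorphism of Noetherian local rings, with m the maximal ideal of A. Let φ : M → N be a B-linear map of finitely generated B-modules, and suppose that both M and N are flat as A-modules and that the induced map φ ⊗_A A/m : M/mM → N/mN is injective. Then φ is injective and the cokernel of φ is flat as an A-module. -/
/-!
Write `T(Q)` for the injectivity of `Q ⊗_A φ`; the hypothesis is `T(A/m)`. An `m`-torsion module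
is a vector space over `A/m`, hence flat over it, so `T` holds for it by base change. Since `M` and
`N` are flat, `T` passes from the ends of a short exact sequence to its middle, and induction along
`0 → (J + mⁿ)/J → A/J → A/(J + mⁿ) → 0` gives `T(A/J)` whenever `mⁿ ⊆ J`.

For an ideal `I`, `T(A/(I + mⁿ))` says `φ⁻¹((I + mⁿ)N) ⊆ (I + mⁿ)M`. As `mB` lies in the maximal
ideal of `B`, Krull's intersection theorem for the finite `B`-module `M/IM` turns this family of
inclusions into `φ⁻¹(IN) ⊆ IM`, which is `T(A/I)`. The case `I = 0` is the injectivity of `φ`, and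
`T(A/I)` for all `I`, together with the flatness of `N`, makes `I ⊗ coker φ → coker φ` injective.
-/

open Function TensorProduct IsLocalRing

section

variable {R M N : Type*} [CommRing R] [AddCommGroup M] [AddCommGroup N] [Module R M] [Module R N]

theorem Submodule.injective_mapQ_iff_comap_le (p : Submodule R M) (q : Submodule R N)
    (f : M →ₗ[R] N) (h : p ≤ q.comap f) :
    Injective (p.mapQ q f h) ↔ q.comap f ≤ p := by
  rw [← LinearMap.ker_eq_bot, Submodule.ker_mapQ, eq_bot_iff, Submodule.map_le_iff_le_comap,
    Submodule.comap_bot, Submodule.ker_mkQ]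

theorem Submodule.isTorsionBySet_map_mkQ {p q : Submodule R M} {I : Ideal R} (h : I • q ≤ p) :
    Module.IsTorsionBySet R (q.map p.mkQ) I := by
  rintro ⟨_, x, hx, rfl⟩ ⟨r, hr⟩
  ext
  exact (Submodule.Quotient.mk_eq_zero p).mpr (h (Submodule.smul_mem_smul hr hx))

theorem Submodule.exact_subtype_factor {p q : Submodule R M} (h : p ≤ q) :
    Exact (q.map p.mkQ).subtype (Submodule.factor h) :=
  LinearMap.exact_iff.mpr <| by
    rw [Submodule.range_subtype, Submodule.factor, Submodule.ker_mapQ, Submodule.comap_id]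

theorem Submodule.mem_of_forall_mem_sup_pow_smul_top (P : Submodule R M) (J : Ideal R)
    [IsHausdorff J (M ⧸ P)] {x : M} (hx : ∀ n : ℕ, x ∈ P ⊔ J ^ n • ⊤) : x ∈ P := by
  rw [← Submodule.Quotient.mk_eq_zero]
  refine IsHausdorff.haus ‹_› _ fun n => SModEq.zero.mpr ?_
  have hxn := Submodule.mem_map_of_mem (f := P.mkQ) (hx n)
  rwa [Submodule.map_sup, Submodule.mkQ_map_self, bot_sup_eq, Submodule.map_smul'',
    Submodule.map_top, Submodule.range_mkQ] at hxn

theorem LinearMap.lTensor_quotient_injective_iff_injective_mapQ (φ : M →ₗ[R] N) (I : Ideal R) :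
    Injective (φ.lTensor (R ⧸ I)) ↔
      Injective ((I • ⊤ : Submodule R M).mapQ (I • ⊤) φ
        (Submodule.smul_top_le_comap_smul_top I φ)) := by
  have hcomm : (quotTensorEquivQuotSMul N I).toLinearMap ∘ₗ φ.lTensor (R ⧸ I) =
      (I • ⊤ : Submodule R M).mapQ (I • ⊤) φ (Submodule.smul_top_le_comap_smul_top I φ) ∘ₗ
        (quotTensorEquivQuotSMul M I).toLinearMap := by
    refine TensorProduct.ext' fun r x => ?_
    obtain ⟨r, rfl⟩ := Ideal.Quotient.mk_surjective r
    simp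
  rw [← EquivLike.comp_injective _ (quotTensorEquivQuotSMul N I), ← LinearEquiv.coe_coe,
    ← LinearMap.coe_comp, hcomm, LinearMap.coe_comp, LinearEquiv.coe_coe, EquivLike.injective_comp]

theorem LinearMap.lTensor_quotient_injective_iff_comap_le (φ : M →ₗ[R] N) (I : Ideal R) :
    Injective (φ.lTensor (R ⧸ I)) ↔ (I • ⊤ : Submodule R N).comap φ ≤ I • ⊤ := by
  rw [lTensor_quotient_injective_iff_injective_mapQ, Submodule.injective_mapQ_iff_comap_le]

theorem LinearMap.lTensor_rTensor_apply_comm (φ : M →ₗ[R] N) {P P' : Type*} [AddCommGroup P]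
    [AddCommGroup P'] [Module R P] [Module R P'] (g : P →ₗ[R] P') (x : P ⊗[R] M) :
    φ.lTensor P' (g.rTensor M x) = g.rTensor N (φ.lTensor P x) := by
  rw [← LinearMap.comp_apply, ← LinearMap.comp_apply, LinearMap.lTensor_comp_rTensor,
    LinearMap.rTensor_comp_lTensor]

open AlgebraTensorModule in
theorem LinearMap.lTensor_injective_of_lTensor_injective_of_flat (φ : M →ₗ[R] N) {K Q : Type*}
    [CommRing K] [Algebra R K] [AddCommGroup Q] [Module R Q] [Module K Q] [IsScalarTower R K Q]
    [Module.Flat K Q] (h : Injective (φ.lTensor K)) : Injective (φ.lTensor Q) := by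
  rw [← coe_lTensor (A := K), ← EquivLike.injective_comp (cancelBaseChange R K K Q M),
    ← LinearEquiv.coe_coe, ← LinearMap.coe_comp, lTensor_comp_cancelBaseChange,
    LinearMap.coe_comp, LinearEquiv.coe_coe, EquivLike.comp_injective]
  exact Module.Flat.lTensor_preserves_injective_linearMap _ h

theorem LinearMap.lTensor_injective_of_isTorsionBySet (φ : M →ₗ[R] N) (m : Ideal R) [m.IsMaximal]
    (hm : Injective (φ.lTensor (R ⧸ m))) {Q : Type*} [AddCommGroup Q] [Module R Q]
    (hQ : Module.IsTorsionBySet R Q m) : Injective (φ.lTensor Q) := by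
  let := Ideal.Quotient.field m
  let := hQ.module
  have : IsScalarTower R (R ⧸ m) Q := hQ.isScalarTower
  exact φ.lTensor_injective_of_lTensor_injective_of_flat hm

theorem LinearMap.lTensor_injective_of_exact_of_lTensor_injective [Module.Flat R M] [Module.Flat R N]
    (φ : M →ₗ[R] N) {P₁ P₂ P₃ : Type*} [AddCommGroup P₁] [AddCommGroup P₂] [AddCommGroup P₃]
    [Module R P₁] [Module R P₂] [Module R P₃] {g₁ : P₁ →ₗ[R] P₂} {g₂ : P₂ →ₗ[R] P₃}
    (hg : Exact g₁ g₂) (hg₁ : Injective g₁)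
    (h₁ : Injective (φ.lTensor P₁)) (h₃ : Injective (φ.lTensor P₃)) :
    Injective (φ.lTensor P₂) := by
  rw [injective_iff_map_eq_zero]
  intro x hx
  obtain ⟨y, rfl⟩ := (Module.Flat.rTensor_exact M hg x).mp <|
    h₃ (by rw [φ.lTensor_rTensor_apply_comm, hx, map_zero, map_zero])
  have hy : φ.lTensor P₁ y = 0 :=
    Module.Flat.rTensor_preserves_injective_linearMap g₁ hg₁ <| by
      rw [← φ.lTensor_rTensor_apply_comm, hx, map_zero]
  rw [h₁ (hy.trans (map_zero _).symm), map_zero]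

theorem LinearMap.lTensor_quotient_injective_of_pow_le [Module.Flat R M] [Module.Flat R N]
    (φ : M →ₗ[R] N) (m : Ideal R) [m.IsMaximal] (hm : Injective (φ.lTensor (R ⧸ m))) {n : ℕ}
    {J : Ideal R} (hJ : m ^ n ≤ J) : Injective (φ.lTensor (R ⧸ J)) := by
  induction n generalizing J with
  | zero =>
    obtain rfl : J = ⊤ := by rwa [pow_zero, Ideal.one_eq_top, top_le_iff] at hJ
    exact injective_of_subsingleton _
  | succ n ih =>
    have hmul : m • (J ⊔ m ^ n) ≤ J := by
      rw [Submodule.smul_sup]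
      exact sup_le Submodule.smul_le_right (by rwa [smul_eq_mul, ← pow_succ'])
    exact φ.lTensor_injective_of_exact_of_lTensor_injective (Submodule.exact_subtype_factor le_sup_left)
      (Submodule.injective_subtype _)
      (φ.lTensor_injective_of_isTorsionBySet m hm (Submodule.isTorsionBySet_map_mkQ hmul))
      (ih le_sup_right)

end

section

variable {A B : Type*} [CommRing A] [CommRing B] [IsLocalRing A] [IsNoetherianRing B]
  [IsLocalRing B] [Algebra A B] [IsLocalHom (algebraMap A B)]

theorem mem_smul_top_of_forall_mem_sup_maximalIdeal_pow_smul_top {M : Type*} [AddCommGroup M]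
    [Module A M] [Module B M] [IsScalarTower A B M] [Module.Finite B M] (I : Ideal A) {x : M}
    (hx : ∀ n : ℕ, x ∈ (I ⊔ maximalIdeal A ^ n) • (⊤ : Submodule A M)) :
    x ∈ I • (⊤ : Submodule A M) := by
  have hB (K : Ideal A) : K • (⊤ : Submodule A M) =
      (K.map (algebraMap A B) • ⊤ : Submodule B M).restrictScalars A := by
    rw [Ideal.smul_restrictScalars, Submodule.restrictScalars_top]
  rw [hB]
  refine Submodule.mem_of_forall_mem_sup_pow_smul_top _ (maximalIdeal B) fun n => ?_
  have hxn := hx n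
  rw [hB, Submodule.restrictScalars_mem] at hxn
  rw [← Submodule.sup_smul]
  refine Submodule.smul_mono_left ?_ hxn
  rw [Ideal.map_sup, Ideal.map_pow]
  exact sup_le_sup_left (Ideal.pow_right_mono (map_maximalIdeal_le _) n) _

theorem LinearMap.lTensor_quotient_injective_of_maximalIdeal_lTensor_injective {M N : Type*}
    [AddCommGroup M] [AddCommGroup N] [Module A M] [Module A N] [Module B M] [Module B N]
    [IsScalarTower A B M] [IsScalarTower A B N] [Module.Finite B M] [Module.Flat A M]
    [Module.Flat A N] (φ : M →ₗ[B] N)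
    (hm : Injective ((φ.restrictScalars A).lTensor (A ⧸ maximalIdeal A))) (I : Ideal A) :
    Injective ((φ.restrictScalars A).lTensor (A ⧸ I)) := by
  rw [lTensor_quotient_injective_iff_comap_le]
  intro x hx
  refine mem_smul_top_of_forall_mem_sup_maximalIdeal_pow_smul_top (B := B) I fun n => ?_
  have hn := (φ.restrictScalars A).lTensor_quotient_injective_of_pow_le _ hm
    (J := I ⊔ maximalIdeal A ^ n) le_sup_right
  rw [lTensor_quotient_injective_iff_comap_le] at hn
  exact hn (Submodule.smul_mono_left le_sup_left hx)

end

/-- Let `A → B` be a local homomorphism of Noetherian local rings, `m` the maximal ideal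
of `A`, and `φ : M → N` a `B`-linear map of finitely generated `B`-modules, with `M` and
`N` flat over `A`. If the induced map `M/mM → N/mN` is injective, then `φ` is injective
and `coker φ` is flat over `A`. -/
theorem stmt9 (A B : Type*) [CommRing A] [CommRing B]
    [IsNoetherianRing B] [IsLocalRing A] [IsLocalRing B]
    [Algebra A B] [IsLocalHom (algebraMap A B)]
    (M N : Type*) [AddCommGroup M] [AddCommGroup N]
    [Module B M] [Module B N] [Module A M] [Module A N]
    [IsScalarTower A B M] [IsScalarTower A B N]
    [Module.Finite B M] [Module.Flat A M] [Module.Flat A N]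
    (φ : M →ₗ[B] N)
    (h : Function.Injective
      (Submodule.mapQ
        ((IsLocalRing.maximalIdeal A) • (⊤ : Submodule A M))
        ((IsLocalRing.maximalIdeal A) • (⊤ : Submodule A N))
        (φ.restrictScalars A)
        (by
          rw [← Submodule.map_le_iff_le_comap, Submodule.map_smul'']
          exact smul_mono_right _ le_top))) :
    Function.Injective φ ∧ Module.Flat A (N ⧸ LinearMap.range φ) := by
  have hI := φ.lTensor_quotient_injective_of_maximalIdeal_lTensor_injective
    ((LinearMap.lTensor_quotient_injective_iff_injective_mapQ _ _).mpr h)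
  constructor
  · have h₀ := (LinearMap.lTensor_quotient_injective_iff_comap_le _ _).mp (hI ⊥)
    rw [injective_iff_map_eq_zero]
    exact fun x hx => by simpa using h₀ (by simpa using hx)
  · rw [Module.Flat.iff_lTensor_injective']
    intro I
    exact lTensor_injective_of_exact_of_exact_of_rTensor_injective
      (f₁ := φ.restrictScalars A) (f₂ := (LinearMap.range φ).mkQ.restrictScalars A)
      φ.exact_map_mkQ_range (LinearMap.range φ).mkQ_surjective
      (LinearMap.exact_subtype_mkQ I) (Submodule.mkQ_surjective _)
      ((LinearMap.lTensor_inj_iff_rTensor_inj _ _).mp (hI I))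
      (Module.Flat.lTensor_preserves_injective_linearMap _ I.injective_subtype)
end

section
/- Let A → B be a local homomorphism of Noetherian local rings, with residue field κ = A/m, and let G → F → E be a complex of finitely generated B-modules such that F and E are flat as A-modules. If the induced complex G ⊗_A κ → F ⊗_A κ → E ⊗_A κ is exact, then G → F → E is exact, and moreover G ⊗_A L → F ⊗_A L → E ⊗_A L is exact for every A-module L. -/
/-!
Write `m` for the maximal ideal of `A` and `κ = A ⧸ m`. Exactness of `G ⊗ L → F ⊗ L → E ⊗ L`
holds first for `L` killed by `m`: such an `L` is a `κ`-vector space, hence flat over `κ`, and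
`G ⊗_A L = (κ ⊗_A G) ⊗_κ L`. A diagram chase along `0 → mⁿL → L → L/mⁿL → 0`, which only needs
`E ⊗ mⁿL → E ⊗ L` to be injective, extends it to `L` killed by a power of `m`. For finitely
generated `L`, every element of the kernel of `F ⊗ L → E ⊗ L` then lies in the image of `G ⊗ L`
modulo `mⁿ(F ⊗ L)` for all `n`; the cokernel of `G ⊗ L → F ⊗ L` is a finite module over the
Noetherian local ring `B`, so Krull's intersection theorem puts the element in the image.
Flatness of `E` again passes to arbitrary `L`, the union of its finitely generated submodules,
and `L = A` is the exactness of `G → F → E`.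
-/

open TensorProduct LinearMap IsLocalRing

theorem Submodule.le_annihilator_quotient_smul_top {R M : Type*} [CommRing R] [AddCommGroup M]
    [Module R M] (I : Ideal R) : I ≤ Module.annihilator R (M ⧸ I • (⊤ : Submodule R M)) := by
  rw [Submodule.annihilator_quotient]
  exact fun r hr ↦ Submodule.mem_colon.mpr fun x _ ↦ Submodule.smul_mem_smul hr mem_top

theorem Submodule.mem_of_forall_mem_sup_maximalIdeal_pow_smul_top {R M : Type*} [CommRing R]
    [IsNoetherianRing R] [IsLocalRing R] [AddCommGroup M] [Module R M] [Module.Finite R M]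
    (N : Submodule R M) {x : M} (hx : ∀ n : ℕ, x ∈ N ⊔ maximalIdeal R ^ n • ⊤) : x ∈ N := by
  rw [← Submodule.Quotient.mk_eq_zero]
  refine IsHausdorff.haus (I := maximalIdeal R) inferInstance _ fun n ↦ ?_
  have := Submodule.mem_map_of_mem (f := N.mkQ) (hx n)
  rwa [Submodule.map_sup, Submodule.map_smul'', Submodule.map_top, Submodule.range_mkQ,
    Submodule.mkQ_map_self, bot_sup_eq, ← SModEq.zero] at this

theorem Module.Finite.tensorProduct_of_isScalarTower (A B M N : Type*) [CommSemiring A]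
    [CommSemiring B] [Algebra A B] [AddCommMonoid M] [AddCommMonoid N] [Module A M] [Module B M]
    [IsScalarTower A B M] [Module A N] [Module.Finite B M] [Module.Finite A N] :
    Module.Finite B (M ⊗[A] N) :=
  .equiv (AlgebraTensorModule.cancelBaseChange A B B M N)

section

variable {A : Type*} [CommRing A]
  {G F E : Type*} [AddCommGroup G] [AddCommGroup F] [AddCommGroup E]
  [Module A G] [Module A F] [Module A E]

lemma lTensor_rTensor_comm {M N L₁ L₂ : Type*} [AddCommGroup M] [AddCommGroup N]
    [AddCommGroup L₁] [AddCommGroup L₂] [Module A M] [Module A N] [Module A L₁] [Module A L₂]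
    (a : M →ₗ[A] N) (φ : L₁ →ₗ[A] L₂) (t : M ⊗[A] L₁) :
    φ.lTensor N (a.rTensor L₁ t) = a.rTensor L₂ (φ.lTensor M t) := by
  rw [← comp_apply, ← comp_apply, lTensor_comp_rTensor, rTensor_comp_lTensor]

lemma rTensor_comp_rTensor_eq_zero {g : G →ₗ[A] F} {f : F →ₗ[A] E} (hfg : f ∘ₗ g = 0)
    (L : Type*) [AddCommGroup L] [Module A L] : f.rTensor L ∘ₗ g.rTensor L = 0 := by
  rw [← rTensor_comp, hfg, rTensor_zero]

lemma exact_rTensor_quotient_iff_exact_mapQ (I : Ideal A) (g : G →ₗ[A] F) (f : F →ₗ[A] E) :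
    Function.Exact (g.rTensor (A ⧸ I)) (f.rTensor (A ⧸ I)) ↔
      Function.Exact (Submodule.mapQ _ _ g (Submodule.smul_top_le_comap_smul_top I g))
        (Submodule.mapQ _ _ f (Submodule.smul_top_le_comap_smul_top I f)) :=
  Function.Exact.iff_of_ladder_linearEquiv (e₁ := (tensorQuotEquivQuotSMul G I).symm)
    (e₂ := (tensorQuotEquivQuotSMul F I).symm) (e₃ := (tensorQuotEquivQuotSMul E I).symm)
    (by ext; simp) (by ext; simp)

lemma range_lTensor_subtype_smul_top_le {L : Type*} [AddCommGroup L] [Module A L] (I : Ideal A) :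
    range ((I • (⊤ : Submodule A L)).subtype.lTensor F) ≤ I • ⊤ := by
  rintro _ ⟨t, rfl⟩
  induction t using TensorProduct.induction_on with
  | zero => simp
  | tmul x z =>
    obtain ⟨z, hz⟩ := z
    rw [lTensor_tmul, Submodule.subtype_apply]
    induction hz using Submodule.smul_induction_on' with
    | smul a ha l _ => rw [tmul_smul]; exact Submodule.smul_mem_smul ha Submodule.mem_top
    | add u _ v _ hu hv => rw [tmul_add]; exact add_mem hu hv
  | add u v hu hv => rw [map_add]; exact add_mem hu hv

variable (g : G →ₗ[A] F) (f : F →ₗ[A] E)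

lemma mem_range_rTensor_sup_of_exact_rTensor_quotient {L : Type*} [AddCommGroup L] [Module A L]
    (L' : Submodule A L) (hq : Function.Exact (g.rTensor (L ⧸ L')) (f.rTensor (L ⧸ L')))
    {x : F ⊗[A] L} (hx : f.rTensor L x = 0) :
    x ∈ range (g.rTensor L) ⊔ range (L'.subtype.lTensor F) := by
  obtain ⟨y, hy⟩ := (hq (L'.mkQ.lTensor F x)).mp (by rw [← lTensor_rTensor_comm, hx, map_zero])
  obtain ⟨y, rfl⟩ := lTensor_surjective G L'.mkQ_surjective y
  have hker : x - g.rTensor L y ∈ ker (L'.mkQ.lTensor F) := by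
    rw [mem_ker, map_sub, ← hy, lTensor_rTensor_comm, sub_self]
  rw [lTensor_mkQ] at hker
  simpa using Submodule.add_mem_sup (mem_range_self (g.rTensor L) y) hker

variable {g f}

lemma exact_rTensor_of_le_annihilator (m : Ideal A) [m.IsMaximal]
    (hκ : Function.Exact (g.rTensor (A ⧸ m)) (f.rTensor (A ⧸ m)))
    {L : Type*} [AddCommGroup L] [Module A L] (hL : m ≤ Module.annihilator A L) :
    Function.Exact (g.rTensor L) (f.rTensor L) := by
  let : Field (A ⧸ m) := Ideal.Quotient.field m
  have hm : Module.IsTorsionBySet A L m := by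
    rw [Module.isTorsionBySet_iff_subset_annihilator]
    exact hL
  let := hm.module
  have := hm.isScalarTower (S := A)
  rw [rTensor_exact_iff_lTensor_exact] at hκ ⊢
  have hκL : Function.Exact
      (AlgebraTensorModule.lTensor (A ⧸ m) L (AlgebraTensorModule.lTensor (A ⧸ m) (A ⧸ m) g))
      (AlgebraTensorModule.lTensor (A ⧸ m) L (AlgebraTensorModule.lTensor (A ⧸ m) (A ⧸ m) f)) :=
    Module.Flat.lTensor_exact L hκ
  exact hκL.of_ladder_linearEquiv_of_exact (g₁₂ := AlgebraTensorModule.lTensor (A ⧸ m) L g)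
    (g₂₃ := AlgebraTensorModule.lTensor (A ⧸ m) L f)
    (AlgebraTensorModule.lTensor_comp_cancelBaseChange A (A ⧸ m) (A ⧸ m) (M := L) g)
    (AlgebraTensorModule.lTensor_comp_cancelBaseChange A (A ⧸ m) (A ⧸ m) (M := L) f)

variable [Module.Flat A E] (hfg : f ∘ₗ g = 0)
include hfg

lemma exact_rTensor_of_exact_rTensor_submodule_quotient {L : Type*} [AddCommGroup L] [Module A L]
    (L' : Submodule A L) (hsub : Function.Exact (g.rTensor L') (f.rTensor L'))
    (hq : Function.Exact (g.rTensor (L ⧸ L')) (f.rTensor (L ⧸ L'))) :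
    Function.Exact (g.rTensor L) (f.rTensor L) := by
  refine exact_of_comp_eq_zero_of_ker_le_range (rTensor_comp_rTensor_eq_zero hfg L) fun x hx ↦ ?_
  obtain ⟨_, ⟨y, rfl⟩, _, ⟨x', rfl⟩, rfl⟩ :=
    Submodule.mem_sup.mp (mem_range_rTensor_sup_of_exact_rTensor_quotient g f L' hq hx)
  rw [mem_ker, map_add, ← comp_apply, rTensor_comp_rTensor_eq_zero hfg, LinearMap.zero_apply,
    zero_add] at hx
  have hx' : f.rTensor L' x' = 0 := by
    apply Module.Flat.lTensor_preserves_injective_linearMap _ L'.injective_subtype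
    rw [map_zero, lTensor_rTensor_comm, hx]
  obtain ⟨y', rfl⟩ := (hsub x').mp hx'
  exact ⟨y + L'.subtype.lTensor G y', by rw [map_add, ← lTensor_rTensor_comm]⟩

lemma exact_rTensor_of_pow_le_annihilator (m : Ideal A) [m.IsMaximal]
    (hκ : Function.Exact (g.rTensor (A ⧸ m)) (f.rTensor (A ⧸ m))) (n : ℕ)
    {L : Type*} [AddCommGroup L] [Module A L] (hL : m ^ n ≤ Module.annihilator A L) :
    Function.Exact (g.rTensor L) (f.rTensor L) := by
  induction n generalizing L with
  | zero =>
    exact exact_rTensor_of_le_annihilator m hκ (le_top.trans (by simpa using hL))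
  | succ n ih =>
    refine exact_rTensor_of_exact_rTensor_submodule_quotient hfg (m ^ n • ⊤)
      (exact_rTensor_of_le_annihilator m hκ ?_) (ih (Submodule.le_annihilator_quotient_smul_top _))
    rw [← Submodule.annihilator_top, Submodule.le_annihilator_iff] at hL
    rw [← Submodule.annihilator, Submodule.le_annihilator_iff, ← Submodule.mul_smul, ← pow_succ',
      hL]

lemma exact_rTensor_of_forall_finite_submodule {L : Type*} [AddCommGroup L] [Module A L]
    (h : ∀ L' : Submodule A L, Module.Finite A L' →
      Function.Exact (g.rTensor L') (f.rTensor L')) :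
    Function.Exact (g.rTensor L) (f.rTensor L) := by
  refine exact_of_comp_eq_zero_of_ker_le_range (rTensor_comp_rTensor_eq_zero hfg L) fun x hx ↦ ?_
  obtain ⟨L', hL', hx'⟩ :=
    TensorProduct.exists_finite_submodule_right_of_setFinite {x} (Set.finite_singleton x)
  obtain ⟨x', rfl⟩ := hx' rfl
  have h0 : f.rTensor L' x' = 0 := by
    apply Module.Flat.lTensor_preserves_injective_linearMap _ L'.injective_subtype
    rw [map_zero, lTensor_rTensor_comm, hx]
  obtain ⟨y', rfl⟩ := (h L' hL' x').mp h0
  exact ⟨L'.subtype.lTensor G y', by rw [lTensor_rTensor_comm]⟩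

end

section

variable {A B : Type*} [CommRing A] [CommRing B] [IsLocalRing A] [IsNoetherianRing B]
  [IsLocalRing B] [Algebra A B] [IsLocalHom (algebraMap A B)]
  {G F E : Type*} [AddCommGroup G] [AddCommGroup F] [AddCommGroup E]
  [Module A G] [Module A F] [Module A E] [Module B G] [Module B F]
  [IsScalarTower A B G] [IsScalarTower A B F] [Module.Finite B F]
  {g : G →ₗ[B] F} {f : F →ₗ[A] E} (hfg : f ∘ₗ g.restrictScalars A = 0)
include hfg

lemma exact_rTensor_of_forall_exact_rTensor_quotient_pow
    {L : Type*} [AddCommGroup L] [Module A L] [Module.Finite A L]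
    (h : ∀ n : ℕ, Function.Exact
      ((g.restrictScalars A).rTensor (L ⧸ maximalIdeal A ^ n • (⊤ : Submodule A L)))
      (f.rTensor (L ⧸ maximalIdeal A ^ n • (⊤ : Submodule A L)))) :
    Function.Exact ((g.restrictScalars A).rTensor L) (f.rTensor L) := by
  refine exact_of_comp_eq_zero_of_ker_le_range (rTensor_comp_rTensor_eq_zero hfg L) fun x hx ↦ ?_
  have : Module.Finite B (F ⊗[A] L) := .tensorProduct_of_isScalarTower A B F L
  let gL : G ⊗[A] L →ₗ[B] F ⊗[A] L := AlgebraTensorModule.rTensor A L g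
  suffices x ∈ range gL by obtain ⟨y, rfl⟩ := this; exact ⟨y, rfl⟩
  refine Submodule.mem_of_forall_mem_sup_maximalIdeal_pow_smul_top _ fun n ↦ ?_
  have hsmul : maximalIdeal A ^ n • (⊤ : Submodule A (F ⊗[A] L)) ≤
      (maximalIdeal B ^ n • ⊤ : Submodule B (F ⊗[A] L)).restrictScalars A := by
    rw [← Submodule.restrictScalars_top A B, ← Ideal.smul_restrictScalars, Ideal.map_pow,
      Submodule.restrictScalars_le]
    exact Submodule.smul_mono_left (Ideal.pow_right_mono (map_maximalIdeal_le _) n)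
  obtain ⟨_, ⟨y, rfl⟩, z, hz, rfl⟩ :=
    Submodule.mem_sup.mp (mem_range_rTensor_sup_of_exact_rTensor_quotient _ f _ (h n) hx)
  exact Submodule.add_mem_sup ⟨y, rfl⟩ (hsmul (range_lTensor_subtype_smul_top_le _ hz))

theorem exact_rTensor_of_exact_rTensor_quotient_maximalIdeal [Module.Flat A E]
    (hκ : Function.Exact ((g.restrictScalars A).rTensor (A ⧸ maximalIdeal A))
      (f.rTensor (A ⧸ maximalIdeal A)))
    (L : Type*) [AddCommGroup L] [Module A L] :
    Function.Exact ((g.restrictScalars A).rTensor L) (f.rTensor L) :=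
  exact_rTensor_of_forall_finite_submodule hfg fun _ _ ↦
    exact_rTensor_of_forall_exact_rTensor_quotient_pow hfg fun n ↦
      exact_rTensor_of_pow_le_annihilator hfg _ hκ n (Submodule.le_annihilator_quotient_smul_top _)

end

/-- Local criterion for exactness: let `A → B` be a local homomorphism of Noetherian
local rings with residue field `κ = A/m`, and `G → F → E` a complex of finitely
generated `B`-modules with `F` and `E` flat over `A`. If the induced complex
`G ⊗_A κ → F ⊗_A κ → E ⊗_A κ` (i.e. `G/mG → F/mF → E/mE`) is exact, then `G → F → E` is
exact, and `G ⊗_A L → F ⊗_A L → E ⊗_A L` is exact for every `A`-module `L`. -/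
theorem stmt15 (A B : Type*) [CommRing A] [CommRing B]
    [IsNoetherianRing B] [IsLocalRing A] [IsLocalRing B]
    [Algebra A B] [IsLocalHom (algebraMap A B)]
    (G F E : Type*) [AddCommGroup G] [AddCommGroup F] [AddCommGroup E]
    [Module B G] [Module B F] [Module B E]
    [Module A G] [Module A F] [Module A E]
    [IsScalarTower A B G] [IsScalarTower A B F] [IsScalarTower A B E]
    [Module.Finite B F] [Module.Flat A E]
    (g : G →ₗ[B] F) (f : F →ₗ[B] E)
    (hcomplex : ∀ x, f (g x) = 0)
    (hexact : Function.Exact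
      (Submodule.mapQ
        ((IsLocalRing.maximalIdeal A) • (⊤ : Submodule A G))
        ((IsLocalRing.maximalIdeal A) • (⊤ : Submodule A F))
        (g.restrictScalars A)
        (by
          rw [← Submodule.map_le_iff_le_comap, Submodule.map_smul'']
          exact smul_mono_right _ le_top))
      (Submodule.mapQ
        ((IsLocalRing.maximalIdeal A) • (⊤ : Submodule A F))
        ((IsLocalRing.maximalIdeal A) • (⊤ : Submodule A E))
        (f.restrictScalars A)
        (by
          rw [← Submodule.map_le_iff_le_comap, Submodule.map_smul'']
          exact smul_mono_right _ le_top))) :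
    Function.Exact g f ∧
      ∀ (L : Type*) [AddCommGroup L] [Module A L],
        Function.Exact ((g.restrictScalars A).rTensor L) ((f.restrictScalars A).rTensor L) := by
  have hfg : f.restrictScalars A ∘ₗ g.restrictScalars A = 0 := LinearMap.ext hcomplex
  have hκ := (exact_rTensor_quotient_iff_exact_mapQ _ _ _).mpr hexact
  refine ⟨?_, exact_rTensor_of_exact_rTensor_quotient_maximalIdeal hfg hκ⟩
  exact (Module.FaithfullyFlat.rTensor_exact_iff_exact A A _ _).mp
    (exact_rTensor_of_exact_rTensor_quotient_maximalIdeal hfg hκ A)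
end

section
/- Let B be a Noetherian local ring with maximal ideal m, and let G → F → E be a complex of finitely generated B-modules. Suppose that for every integer n ≥ 1 the induced complex G/m^nG → F/m^nF → E/m^nE is exact (at the middle term). Then G → F → E is exact. -/
/-! Exactness modulo `mⁿ` puts `ker f` inside `range g + mⁿF` for every `n`. Since
`F ⧸ range g` is finitely generated over the Noetherian local ring `B`, Krull's intersection
theorem makes it `m`-adically separated, i.e. `range g` is `m`-adically closed in `F`, so
`ker f ≤ ⋂ₙ (range g + mⁿF) = range g`. -/

open IsLocalRing

theorem Submodule.iInf_sup_pow_smul_top_eq {R M : Type*} [CommRing R] [AddCommGroup M]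
    [Module R M] (I : Ideal R) (N : Submodule R M) [IsHausdorff I (M ⧸ N)] :
    ⨅ n : ℕ, (N ⊔ I ^ n • ⊤) = N := by
  refine le_antisymm (fun x hx ↦ ?_) (le_iInf fun _ ↦ le_sup_left)
  have hmap : ∀ n : ℕ, (N ⊔ I ^ n • ⊤).map N.mkQ = I ^ n • ⊤ := fun n ↦ by
    rw [Submodule.map_sup, Submodule.map_smul'', Submodule.map_top, Submodule.range_mkQ,
      Submodule.mkQ_map_self, bot_sup_eq]
  have hzero : N.mkQ x = 0 := IsHausdorff.haus ‹_› _ fun n ↦ by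
    rw [SModEq.zero, ← hmap n]
    exact Submodule.mem_map_of_mem (Submodule.mem_iInf _ |>.mp hx n)
  simpa using hzero

theorem LinearMap.ker_le_range_sup_of_exact_mapQ {R G F E : Type*} [Ring R]
    [AddCommGroup G] [AddCommGroup F] [AddCommGroup E] [Module R G] [Module R F] [Module R E]
    {g : G →ₗ[R] F} {f : F →ₗ[R] E} {pG : Submodule R G} {pF : Submodule R F}
    {pE : Submodule R E} (hg : pG ≤ pF.comap g) (hf : pF ≤ pE.comap f)
    (h : Function.Exact (pG.mapQ pF g hg) (pF.mapQ pE f hf)) :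
    LinearMap.ker f ≤ LinearMap.range g ⊔ pF := by
  intro x hx
  obtain ⟨y, hy⟩ := (h (pF.mkQ x)).mp <| by
    simp [Submodule.mapQ_apply, LinearMap.mem_ker.mp hx]
  obtain ⟨y, rfl⟩ := pG.mkQ_surjective y
  have hdiff : x - g y ∈ pF := sub_mem_comm_iff.mp ((Submodule.Quotient.eq _).mp hy)
  exact Submodule.mem_sup.mpr ⟨g y, ⟨y, rfl⟩, x - g y, hdiff, add_sub_cancel _ _⟩

/-- Let `B` be a Noetherian local ring with maximal ideal `m` and `G → F → E` a complex
of finitely generated `B`-modules. If for every `n ≥ 1` the induced complex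
`G/mⁿG → F/mⁿF → E/mⁿE` is exact (at the middle term), then `G → F → E` is exact. -/
theorem stmt16 (B : Type*) [CommRing B] [IsNoetherianRing B] [IsLocalRing B]
    (G F E : Type*) [AddCommGroup G] [AddCommGroup F] [AddCommGroup E]
    [Module B G] [Module B F] [Module B E]
    [Module.Finite B F]
    (g : G →ₗ[B] F) (f : F →ₗ[B] E)
    (hcomplex : ∀ x, f (g x) = 0)
    (hexact : ∀ n : ℕ, 1 ≤ n →
      Function.Exact
        (Submodule.mapQ
          (((IsLocalRing.maximalIdeal B) ^ n) • (⊤ : Submodule B G))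
          (((IsLocalRing.maximalIdeal B) ^ n) • (⊤ : Submodule B F))
          g
          (by
            rw [← Submodule.map_le_iff_le_comap, Submodule.map_smul'']
            exact smul_mono_right _ le_top))
        (Submodule.mapQ
          (((IsLocalRing.maximalIdeal B) ^ n) • (⊤ : Submodule B F))
          (((IsLocalRing.maximalIdeal B) ^ n) • (⊤ : Submodule B E))
          f
          (by
            rw [← Submodule.map_le_iff_le_comap, Submodule.map_smul'']
            exact smul_mono_right _ le_top))) :
    Function.Exact g f := by
  rw [LinearMap.exact_iff]
  refine le_antisymm ?_ (LinearMap.range_le_ker_iff.mpr (LinearMap.ext hcomplex))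
  rw [← Submodule.iInf_sup_pow_smul_top_eq (maximalIdeal B) (LinearMap.range g)]
  refine le_iInf fun n ↦ ?_
  rcases Nat.eq_zero_or_pos n with rfl | hn
  · simp
  · exact LinearMap.ker_le_range_sup_of_exact_mapQ _ _ (hexact n hn)
end
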